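/- Let G be a connected graph on n vertices with adjacency eigenvalues λ₁ ≥ ⋯ ≥ λₙ, λ = max{|λ₂|,|λₙ|}, and normalized Perron eigenvector ν with minimum entry ν_min. Then the zero forcing number satisfies Z(G) ≥ n(1 − 2λ/(n(λ + λ₁)ν_min²)). -/

import Mathlib

open Matrix Finset

/-- The zero forcing closure: black vertices starting from `S`, where a black
vertex `u` whose only white neighbour is `w` colors `w` black. -/
inductive ZfClosure {n : ℕ} (G : SimpleGraph (Fin n)) (S : Set (Fin n)) : Fin n → Prop
  | init (v : Fin n) (hv : v ∈ S) : ZfClosure G S v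
  | force (u w : Fin n) (hu : ZfClosure G S u) (hadj : G.Adj u w)
      (hothers : ∀ x, G.Adj u x → x ≠ w → ZfClosure G S x) : ZfClosure G S w

/-- The zero forcing number: the least size of a set of initially black vertices
whose zero forcing closure is the whole vertex set. -/
noncomputable def zeroForcingNumber {n : ℕ} (G : SimpleGraph (Fin n)) : ℕ :=
  sInf {k | ∃ S : Finset (Fin n), S.card = k ∧ ∀ v, ZfClosure G (↑S) v}

/-!
Take a minimum zero forcing set `B`. Its `k = n - Z(G)` forces `uᵢ → wᵢ`, in the order they are
performed, form a chain in which `uᵢ` is not adjacent to `wⱼ` for `i < j`: when `uᵢ` forces, `wⱼ`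
is still white and different from `wᵢ`. Split the chain in the middle, sharing the middle force
half-and-half when `k` is odd, and let `x`, `y` be the resulting weighted indicator vectors of the
`uᵢ` and the `wⱼ`. Only the middle force contributes to `E = ⟨x, A y⟩ ≥ 0`, and
`⟨ν, x⟩, ⟨ν, y⟩ ≥ k ν_min / 2`, `‖x‖² + ‖y‖² = k - 2E`. The Perron expander mixing lemma
`|⟨x, A y⟩ - λ₁ ⟨ν, x⟩ ⟨ν, y⟩| ≤ λ ‖x - ⟨ν, x⟩ ν‖ ‖y - ⟨ν, y⟩ ν‖` gives
`λ₁ (k ν_min / 2)² ≤ E + λ (k / 2 - E - (k ν_min / 2)²)`, and since `λ ≥ |λₙ| ≥ 1` for a graph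
with an edge, the term `E` is absorbed, leaving `k (λ + λ₁) ν_min² ≤ 2 λ`.
-/

namespace Matrix.IsHermitian

variable {ι : Type*} [Fintype ι] [DecidableEq ι] {A : Matrix ι ι ℝ}

noncomputable def eigenCoords (hA : A.IsHermitian) (x : ι → ℝ) : ι → ℝ :=
  (hA.eigenvectorUnitary : Matrix ι ι ℝ)ᵀ *ᵥ x

lemma eigenCoords_dotProduct (hA : A.IsHermitian) (x y : ι → ℝ) :
    hA.eigenCoords x ⬝ᵥ hA.eigenCoords y = x ⬝ᵥ y := by
  set U : Matrix ι ι ℝ := ↑hA.eigenvectorUnitary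
  have hU : U * Uᵀ = 1 := by
    simpa [U, star_eq_conjTranspose] using Unitary.coe_mul_star_self hA.eigenvectorUnitary
  rw [eigenCoords, eigenCoords, dotProduct_mulVec, vecMul_transpose, mulVec_mulVec, hU,
    one_mulVec]

lemma eigenCoords_apply (hA : A.IsHermitian) (x : ι → ℝ) (i : ι) :
    hA.eigenCoords x i = ⇑(hA.eigenvectorBasis i) ⬝ᵥ x :=
  rfl

lemma eigenCoords_mulVec (hA : A.IsHermitian) (y : ι → ℝ) (i : ι) :
    hA.eigenCoords (A *ᵥ y) i = hA.eigenvalues i * hA.eigenCoords y i := by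
  have hAT : Aᵀ = A := by simpa using hA.eq
  rw [eigenCoords_apply, eigenCoords_apply, dotProduct_mulVec, ← mulVec_transpose, hAT,
    mulVec_eigenvectorBasis, smul_dotProduct, smul_eq_mul]

lemma dotProduct_mulVec_eq_sum (hA : A.IsHermitian) (x y : ι → ℝ) :
    x ⬝ᵥ A *ᵥ y = ∑ i, hA.eigenvalues i * (hA.eigenCoords x i * hA.eigenCoords y i) := by
  rw [← hA.eigenCoords_dotProduct, dotProduct]
  exact sum_congr rfl fun i _ => by rw [hA.eigenCoords_mulVec]; ring

lemma sum_sq_eigenCoords (hA : A.IsHermitian) (x : ι → ℝ) :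
    ∑ i, hA.eigenCoords x i ^ 2 = x ⬝ᵥ x := by
  rw [← hA.eigenCoords_dotProduct x x, dotProduct]
  simp only [sq]

lemma mul_dotProduct_self_le (hA : A.IsHermitian) {m : ℝ} (hm : ∀ i, m ≤ hA.eigenvalues i)
    (z : ι → ℝ) : m * (z ⬝ᵥ z) ≤ z ⬝ᵥ A *ᵥ z := by
  rw [hA.dotProduct_mulVec_eq_sum, ← hA.sum_sq_eigenCoords, mul_sum]
  exact sum_le_sum fun i _ => by
    rw [← sq]; exact mul_le_mul_of_nonneg_right (hm i) (sq_nonneg _)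

lemma abs_dotProduct_mulVec_le {lam : ℝ} (hA : A.IsHermitian) (hlam : 0 ≤ lam) {x : ι → ℝ}
    (hx : ∀ i, |hA.eigenvalues i| ≤ lam ∨ hA.eigenCoords x i = 0) (y : ι → ℝ) :
    |x ⬝ᵥ A *ᵥ y| ≤ lam * √(x ⬝ᵥ x) * √(y ⬝ᵥ y) := by
  set p := hA.eigenCoords x
  set q := hA.eigenCoords y
  have hterm : ∀ i, |hA.eigenvalues i * (p i * q i)| ≤ lam * (|p i| * |q i|) := fun i => by
    rcases hx i with h | h
    · rw [abs_mul, abs_mul]; exact mul_le_mul_of_nonneg_right h (by positivity)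
    · simp [p, h]
  have hcs : ∑ i, |p i| * |q i| ≤ √(x ⬝ᵥ x) * √(y ⬝ᵥ y) := by
    rw [← hA.sum_sq_eigenCoords x, ← hA.sum_sq_eigenCoords y, ← Real.sqrt_mul (by positivity)]
    apply Real.le_sqrt_of_sq_le
    simpa only [sq_abs] using sum_mul_sq_le_sq_mul_sq univ (fun i => |p i|) (fun i => |q i|)
  calc |x ⬝ᵥ A *ᵥ y| ≤ ∑ i, lam * (|p i| * |q i|) := by
        rw [hA.dotProduct_mulVec_eq_sum]
        exact (abs_sum_le_sum_abs _ _).trans (sum_le_sum fun i _ => hterm i)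
    _ ≤ lam * √(x ⬝ᵥ x) * √(y ⬝ᵥ y) := by
        rw [← mul_sum, mul_assoc]; exact mul_le_mul_of_nonneg_left hcs hlam

lemma eigenCoords_eq_zero_of_ne {lam₁ : ℝ} (hA : A.IsHermitian) {ν : ι → ℝ}
    (hν : A *ᵥ ν = lam₁ • ν) {i : ι} (hi : hA.eigenvalues i ≠ lam₁) :
    hA.eigenCoords ν i = 0 := by
  have h := hA.eigenCoords_mulVec ν i
  rw [hν] at h
  simp only [eigenCoords, mulVec_smul, Pi.smul_apply, smul_eq_mul] at h
  by_contra hc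
  exact hi (mul_right_cancel₀ hc h).symm

lemma eigenCoords_eq_zero_of_dotProduct_eq_zero {lam₁ : ℝ} (hA : A.IsHermitian) {ν : ι → ℝ}
    (hν : A *ᵥ ν = lam₁ • ν) (hν0 : ν ≠ 0) {i₀ : ι}
    (hsimple : ∀ j ≠ i₀, hA.eigenvalues j ≠ lam₁) {x : ι → ℝ} (hx : ν ⬝ᵥ x = 0) :
    hA.eigenCoords x i₀ = 0 := by
  have hsupp : ∀ j ≠ i₀, hA.eigenCoords ν j = 0 := fun j hj =>
    hA.eigenCoords_eq_zero_of_ne hν (hsimple j hj)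
  have hdot :
      hA.eigenCoords ν ⬝ᵥ hA.eigenCoords x = hA.eigenCoords ν i₀ * hA.eigenCoords x i₀ :=
    Fintype.sum_eq_single i₀ fun j hj => by rw [hsupp j hj, zero_mul]
  have hνi₀ : hA.eigenCoords ν i₀ ≠ 0 := by
    intro h
    apply hν0
    rw [← dotProduct_self_eq_zero, ← hA.eigenCoords_dotProduct]
    exact Fintype.sum_eq_zero _ fun j => by
      by_cases hj : j = i₀
      · rw [hj, h, zero_mul]
      · rw [hsupp j hj, zero_mul]
  rw [hA.eigenCoords_dotProduct, hx] at hdot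
  exact (mul_eq_zero.mp hdot.symm).resolve_left hνi₀

end Matrix.IsHermitian

section PerronMixing

variable {ι : Type*} [Fintype ι] {ν : ι → ℝ}

lemma dotProduct_sub_smul_self (hν : ν ⬝ᵥ ν = 1) (x : ι → ℝ) :
    ν ⬝ᵥ (x - (ν ⬝ᵥ x) • ν) = 0 := by
  rw [dotProduct_sub, dotProduct_smul, hν, smul_eq_mul, mul_one, sub_self]

lemma sub_smul_dotProduct_sub_smul (hν : ν ⬝ᵥ ν = 1) (x : ι → ℝ) :
    (x - (ν ⬝ᵥ x) • ν) ⬝ᵥ (x - (ν ⬝ᵥ x) • ν) = x ⬝ᵥ x - (ν ⬝ᵥ x) ^ 2 := by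
  simp only [sub_dotProduct, dotProduct_sub, smul_dotProduct, dotProduct_smul, hν,
    dotProduct_comm x ν, smul_eq_mul]
  ring

lemma sq_dotProduct_le_dotProduct_self (hν : ν ⬝ᵥ ν = 1) (x : ι → ℝ) :
    (ν ⬝ᵥ x) ^ 2 ≤ x ⬝ᵥ x := by
  have h := dotProduct_star_self_nonneg (x - (ν ⬝ᵥ x) • ν)
  rw [star_trivial, sub_smul_dotProduct_sub_smul hν] at h
  linarith

lemma sub_smul_dotProduct_mulVec_sub_smul {A : Matrix ι ι ℝ} (hAT : Aᵀ = A) {lam₁ : ℝ}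
    (hν : ν ⬝ᵥ ν = 1) (hAν : A *ᵥ ν = lam₁ • ν) (x y : ι → ℝ) :
    (x - (ν ⬝ᵥ x) • ν) ⬝ᵥ A *ᵥ (y - (ν ⬝ᵥ y) • ν)
      = x ⬝ᵥ A *ᵥ y - lam₁ * (ν ⬝ᵥ x) * (ν ⬝ᵥ y) := by
  have hνA : ∀ z, ν ⬝ᵥ A *ᵥ z = lam₁ * (ν ⬝ᵥ z) := fun z => by
    rw [dotProduct_mulVec, ← mulVec_transpose, hAT, hAν, smul_dotProduct, smul_eq_mul]
  simp only [mulVec_sub, mulVec_smul, hAν, sub_dotProduct, dotProduct_sub, smul_dotProduct,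
    dotProduct_smul, hνA, hν, dotProduct_comm x ν, smul_eq_mul]
  ring

def IsPerronMixing (A : Matrix ι ι ℝ) (ν : ι → ℝ) (lam₁ lam : ℝ) : Prop :=
  ∀ x y : ι → ℝ, |x ⬝ᵥ A *ᵥ y - lam₁ * (ν ⬝ᵥ x) * (ν ⬝ᵥ y)| ≤
    lam * √(x ⬝ᵥ x - (ν ⬝ᵥ x) ^ 2) * √(y ⬝ᵥ y - (ν ⬝ᵥ y) ^ 2)

theorem Matrix.IsHermitian.isPerronMixing [DecidableEq ι] {A : Matrix ι ι ℝ}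
    (hA : A.IsHermitian) {lam₁ lam : ℝ} (hlam : 0 ≤ lam) (hν : ν ⬝ᵥ ν = 1)
    (hAν : A *ᵥ ν = lam₁ • ν) {i₀ : ι} (hi₀ : hA.eigenvalues i₀ = lam₁)
    (hgap : ∀ j ≠ i₀, |hA.eigenvalues j| ≤ lam) : IsPerronMixing A ν lam₁ lam := by
  intro x y
  have hAT : Aᵀ = A := by simpa using hA.eq
  set x' := x - (ν ⬝ᵥ x) • ν
  have hcoords : ∀ i, |hA.eigenvalues i| ≤ lam ∨ hA.eigenCoords x' i = 0 := by
    intro i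
    by_cases hi : i = i₀
    · subst hi
      by_cases hlam₁ : |lam₁| ≤ lam
      · exact .inl (hi₀ ▸ hlam₁)
      -- otherwise `lam₁` is a simple eigenvalue, and `x' ⊥ ν` has no component along it
      refine .inr (hA.eigenCoords_eq_zero_of_dotProduct_eq_zero hAν ?_ ?_
        (dotProduct_sub_smul_self hν x))
      · rintro rfl
        simp at hν
      · exact fun j hj hj' => hlam₁ (hj' ▸ hgap j hj)
    · exact .inl (hgap i hi)
  rw [← sub_smul_dotProduct_mulVec_sub_smul hAT hν hAν, ← sub_smul_dotProduct_sub_smul hν,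
    ← sub_smul_dotProduct_sub_smul hν]
  exact hA.abs_dotProduct_mulVec_le hlam hcoords _

lemma IsPerronMixing.mul_sq_le {A : Matrix ι ι ℝ} {lam₁ lam : ℝ}
    (hmix : IsPerronMixing A ν lam₁ lam) (hν : ν ⬝ᵥ ν = 1) (hlam₁ : 0 ≤ lam₁) (hlam : 0 ≤ lam)
    {x y : ι → ℝ} {r : ℝ} (hr : 0 ≤ r) (hx : r ≤ ν ⬝ᵥ x) (hy : r ≤ ν ⬝ᵥ y) :
    lam₁ * r ^ 2 ≤ x ⬝ᵥ A *ᵥ y + lam * ((x ⬝ᵥ x + y ⬝ᵥ y) / 2 - r ^ 2) := by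
  set P := x ⬝ᵥ x - (ν ⬝ᵥ x) ^ 2
  set Q := y ⬝ᵥ y - (ν ⬝ᵥ y) ^ 2
  have hP : 0 ≤ P := sub_nonneg.mpr (sq_dotProduct_le_dotProduct_self hν x)
  have hQ : 0 ≤ Q := sub_nonneg.mpr (sq_dotProduct_le_dotProduct_self hν y)
  have hamgm : √P * √Q ≤ (P + Q) / 2 := by
    nlinarith [sq_nonneg (√P - √Q), Real.sq_sqrt hP, Real.sq_sqrt hQ]
  have hPQ : (P + Q) / 2 ≤ (x ⬝ᵥ x + y ⬝ᵥ y) / 2 - r ^ 2 := by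
    nlinarith [mul_le_mul hx hx hr (hr.trans hx), mul_le_mul hy hy hr (hr.trans hy)]
  have hrr : r ^ 2 ≤ (ν ⬝ᵥ x) * (ν ⬝ᵥ y) := by
    rw [sq]
    exact mul_le_mul hx hy hr (hr.trans hx)
  have hlower := (abs_le.mp (hmix x y)).1
  nlinarith [mul_le_mul_of_nonneg_left hrr hlam₁,
    mul_le_mul_of_nonneg_left (hamgm.trans hPQ) hlam]

end PerronMixing

section ForcingChain

variable {V : Type*}

structure IsForcingChain (G : SimpleGraph V) {k : ℕ} (u w : Fin k → V) : Prop where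
  adj : ∀ i, G.Adj (u i) (w i)
  not_adj : ∀ ⦃i j⦄, i < j → ¬ G.Adj (u i) (w j)

namespace IsForcingChain

variable {G : SimpleGraph V} {k : ℕ} {u w : Fin k → V}

lemma injective_left (hc : IsForcingChain G u w) : Function.Injective u := by
  intro i j hij
  by_contra hne
  rcases lt_or_gt_of_ne hne with h | h
  · exact hc.not_adj h (hij ▸ hc.adj j)
  · exact hc.not_adj h (hij ▸ hc.adj i)

lemma injective_right (hc : IsForcingChain G u w) : Function.Injective w := by
  intro i j hij
  by_contra hne
  rcases lt_or_gt_of_ne hne with h | h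
  · exact hc.not_adj h (hij ▸ hc.adj i)
  · exact hc.not_adj h (hij ▸ hc.adj j)

lemma cons (hc : IsForcingChain G u w) {u₀ w₀ : V} (hadj : G.Adj u₀ w₀)
    (hnot : ∀ j, ¬ G.Adj u₀ (w j)) : IsForcingChain G (Fin.cons u₀ u) (Fin.cons w₀ w) where
  adj i := by
    cases i using Fin.cases with
    | zero => exact hadj
    | succ i => exact hc.adj i
  not_adj i j hij := by
    cases j using Fin.cases with
    | zero => exact absurd hij (Fin.not_lt_zero i)
    | succ j =>
      cases i using Fin.cases with
      | zero => exact hnot j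
      | succ i => exact hc.not_adj (Fin.succ_lt_succ_iff.mp hij)

end IsForcingChain

namespace ZfClosure

variable {n : ℕ} {G : SimpleGraph (Fin n)}

lemma mono {S T : Set (Fin n)} (hST : S ⊆ T) {v : Fin n} (h : ZfClosure G S v) :
    ZfClosure G T v := by
  induction h with
  | init v hv => exact init v (hST hv)
  | force u w _ hadj _ ihu ihothers => exact force u w ihu hadj ihothers

lemma exists_force {B : Finset (Fin n)} (hB : ∀ v, ZfClosure G B v) (hne : Bᶜ.Nonempty) :
    ∃ u w, u ∈ B ∧ w ∉ B ∧ G.Adj u w ∧ ∀ x, G.Adj u x → x ≠ w → x ∈ B := by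
  by_contra! hstuck
  have hclosed : ∀ v, ZfClosure G B v → v ∈ B := by
    intro v hv
    induction hv with
    | init v hv => exact hv
    | force u w _ hadj _ ihu ihothers =>
      by_contra hw
      obtain ⟨x, hx, hxw, hxB⟩ := hstuck u w ihu hw hadj
      exact hxB (ihothers x hx hxw)
  obtain ⟨v, hv⟩ := hne
  exact mem_compl.mp hv (hclosed v (hB v))

lemma exists_isForcingChain {B : Finset (Fin n)} {N : ℕ} (hcard : Bᶜ.card = N)
    (hB : ∀ v, ZfClosure G B v) :
    ∃ u w : Fin N → Fin n, IsForcingChain G u w ∧ ∀ j, w j ∉ B := by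
  induction N generalizing B with
  | zero => exact ⟨Fin.elim0, Fin.elim0, ⟨fun i => i.elim0, fun i => i.elim0⟩, fun j => j.elim0⟩
  | succ N ih =>
    obtain ⟨u₀, w₀, -, hw₀, hadj, hothers⟩ := exists_force hB (card_pos.mp (by omega))
    have hcard' : (insert w₀ B)ᶜ.card = N := by
      rw [compl_insert, card_erase_of_mem (mem_compl.mpr hw₀), hcard, Nat.add_sub_cancel]
    obtain ⟨u, w, hc, hwB⟩ := ih hcard' fun v => (hB v).mono (by simp)
    refine ⟨Fin.cons u₀ u, Fin.cons w₀ w, hc.cons hadj fun j hj => ?_, fun j => ?_⟩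
    · obtain ⟨hne, hnB⟩ := not_or.mp (mem_insert.not.mp (hwB j))
      exact hnB (hothers _ hj hne)
    · cases j using Fin.cases with
      | zero => exact hw₀
      | succ j => exact fun h => hwB j (mem_insert_of_mem h)

end ZfClosure

lemma exists_card_eq_zeroForcingNumber {n : ℕ} (G : SimpleGraph (Fin n)) :
    ∃ B : Finset (Fin n), B.card = zeroForcingNumber G ∧ ∀ v, ZfClosure G B v :=
  Nat.sInf_mem (s := {k | ∃ S : Finset (Fin n), S.card = k ∧ ∀ v, ZfClosure G S v})
    ⟨_, univ, rfl, fun v => .init v (mem_univ v)⟩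

variable [Fintype V] [DecidableEq V] {k : ℕ}

noncomputable def chainVec (f : Fin k → V) (a : Fin k → ℝ) : V → ℝ :=
  ∑ i, Pi.single (f i) (a i)

lemma dotProduct_chainVec (z : V → ℝ) (f : Fin k → V) (a : Fin k → ℝ) :
    z ⬝ᵥ chainVec f a = ∑ i, z (f i) * a i := by
  simp only [chainVec, dotProduct_sum, dotProduct_single]

lemma chainVec_dotProduct_mulVec_chainVec (M : Matrix V V ℝ) (f g : Fin k → V)
    (a b : Fin k → ℝ) :
    chainVec f a ⬝ᵥ M *ᵥ chainVec g b = ∑ i, ∑ j, a i * M (f i) (g j) * b j := by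
  simp only [chainVec, mulVec_sum, sum_dotProduct, dotProduct_sum, single_dotProduct]
  rw [sum_comm]
  simp [mulVec_single, mul_comm, mul_left_comm]

lemma chainVec_dotProduct_self {f : Fin k → V} (hf : Function.Injective f) (a : Fin k → ℝ) :
    chainVec f a ⬝ᵥ chainVec f a = ∑ i, a i ^ 2 := by
  have h := chainVec_dotProduct_mulVec_chainVec 1 f f a a
  rw [one_mulVec] at h
  simp [h, one_apply, hf.eq_iff, sq]

end ForcingChain

noncomputable def splitWeight (k i : ℕ) : ℝ :=
  if 2 * i + 1 < k then 1 else if 2 * i + 1 = k then 1 / 2 else 0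

lemma splitWeight_nonneg (k i : ℕ) : 0 ≤ splitWeight k i := by
  unfold splitWeight; split_ifs <;> norm_num

lemma splitWeight_le_one (k i : ℕ) : splitWeight k i ≤ 1 := by
  unfold splitWeight; split_ifs <;> norm_num

lemma splitWeight_add_splitWeight_sub {k i : ℕ} (hi : i < k) :
    splitWeight k i + splitWeight k (k - (i + 1)) = 1 := by
  unfold splitWeight; split_ifs <;> norm_num <;> omega

lemma splitWeight_mul_one_sub {k i j : ℕ} (hji : j < i) :
    splitWeight k i * (1 - splitWeight k j) = 0 := by
  unfold splitWeight; split_ifs <;> norm_num <;> omega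

lemma sum_splitWeight (k : ℕ) : ∑ i : Fin k, splitWeight k i = k / 2 := by
  have hrev := Equiv.sum_comp Fin.revPerm (fun i : Fin k => splitWeight k i)
  simp only [Fin.revPerm_apply] at hrev
  have hpair : ∑ i : Fin k, (splitWeight k i + splitWeight k (Fin.rev i)) = k := by
    simp [Fin.val_rev, splitWeight_add_splitWeight_sub]
  rw [sum_add_distrib, hrev] at hpair
  linarith

theorem IsForcingChain.length_mul_le {V : Type*} [Fintype V] [DecidableEq V]
    {G : SimpleGraph V} [DecidableRel G.Adj] {k : ℕ} {u w : Fin k → V}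
    (hc : IsForcingChain G u w) {ν : V → ℝ} {lam₁ lam ν₀ : ℝ}
    (hmix : IsPerronMixing (G.adjMatrix ℝ) ν lam₁ lam) (hν : ν ⬝ᵥ ν = 1) (hlam₁ : 0 ≤ lam₁)
    (hlam : 1 ≤ lam) (hν₀ : 0 ≤ ν₀) (hνmin : ∀ v, ν₀ ≤ ν v) :
    k * ((lam + lam₁) * ν₀ ^ 2) ≤ 2 * lam := by
  set a : Fin k → ℝ := fun i => splitWeight k i
  have ha0 (i) : 0 ≤ a i := splitWeight_nonneg k i
  have ha1 (i) : a i ≤ 1 := splitWeight_le_one k i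
  set x := chainVec u a
  set y := chainVec w (1 - a)
  set E := ∑ i, a i * (1 - a i)
  have hE : 0 ≤ E := sum_nonneg fun i _ => mul_nonneg (ha0 i) (sub_nonneg.2 (ha1 i))
  have hsum : ∑ i, a i = k / 2 := sum_splitWeight k
  have hsum' : ∑ i, (1 - a) i = k / 2 := by
    simp only [Pi.sub_apply, Pi.one_apply, sum_sub_distrib, hsum, sum_const, card_univ,
      Fintype.card_fin, nsmul_eq_mul, mul_one]
    ring
  have hνx : ν₀ * (k / 2) ≤ ν ⬝ᵥ x := by
    rw [dotProduct_chainVec, ← hsum, mul_sum]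
    exact sum_le_sum fun i _ => mul_le_mul_of_nonneg_right (hνmin _) (ha0 i)
  have hνy : ν₀ * (k / 2) ≤ ν ⬝ᵥ y := by
    rw [dotProduct_chainVec, ← hsum', mul_sum]
    exact sum_le_sum fun i _ => mul_le_mul_of_nonneg_right (hνmin _) (sub_nonneg.2 (ha1 i))
  have hxy : x ⬝ᵥ G.adjMatrix ℝ *ᵥ y = E := by
    rw [chainVec_dotProduct_mulVec_chainVec]
    refine sum_congr rfl fun i _ => ?_
    rw [Fintype.sum_eq_single i fun j hji => ?_]
    · simp [SimpleGraph.adjMatrix_apply, hc.adj i]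
    · rcases lt_or_gt_of_ne hji with h | h
      · simp only [Pi.sub_apply, Pi.one_apply]
        rw [mul_right_comm, splitWeight_mul_one_sub h, zero_mul]
      · simp [SimpleGraph.adjMatrix_apply, hc.not_adj h]
  have hnorm : x ⬝ᵥ x + y ⬝ᵥ y = k - 2 * E := by
    rw [chainVec_dotProduct_self hc.injective_left, chainVec_dotProduct_self hc.injective_right,
      ← sum_add_distrib]
    calc ∑ i, (a i ^ 2 + (1 - a) i ^ 2) = ∑ i, (1 - 2 * (a i * (1 - a i))) :=
          sum_congr rfl fun i _ => by simp only [Pi.sub_apply, Pi.one_apply]; ring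
      _ = k - 2 * E := by simp [sum_sub_distrib, ← mul_sum, E]
  have key := hmix.mul_sq_le hν hlam₁ (by linarith) (by positivity) hνx hνy
  rw [hxy, hnorm] at key
  rcases k.eq_zero_or_pos with rfl | hk
  · rw [Nat.cast_zero, zero_mul]
    linarith
  have hk' : (0 : ℝ) < k := by exact_mod_cast hk
  refine le_of_mul_le_mul_left ?_ hk'
  nlinarith

section AdjMatrix

variable {V : Type*} [Fintype V] {G : SimpleGraph V} [DecidableRel G.Adj]

lemma SimpleGraph.le_neg_one_of_le_eigenvalues [DecidableEq V]
    (hA : (G.adjMatrix ℝ).IsHermitian) {m : ℝ} (hm : ∀ i, m ≤ hA.eigenvalues i) {a b : V}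
    (hab : G.Adj a b) : m ≤ -1 := by
  set z : V → ℝ := Pi.single a 1 - Pi.single b 1
  have hzz : z ⬝ᵥ z = 2 := by
    simp [z, hab.ne, hab.ne']
    norm_num
  have hzAz : z ⬝ᵥ G.adjMatrix ℝ *ᵥ z = -2 := by
    simp [z, mulVec_sub, hab, hab.symm]
    norm_num
  have h := hA.mul_dotProduct_self_le hm z
  rw [hzz, hzAz] at h
  linarith

lemma SimpleGraph.nonneg_of_adjMatrix_mulVec_eq_smul [Nonempty V] {ν : V → ℝ}
    (hν : ∀ v, 0 < ν v) {μ : ℝ} (h : G.adjMatrix ℝ *ᵥ ν = μ • ν) : 0 ≤ μ := by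
  obtain ⟨v⟩ := ‹Nonempty V›
  have hv := congrFun h v
  rw [adjMatrix_mulVec_apply, Pi.smul_apply, smul_eq_mul] at hv
  exact nonneg_of_mul_nonneg_left (hv ▸ sum_nonneg fun u _ => (hν u).le) (hν v)

end AdjMatrix

lemma abs_le_max_abs_of_antitone {n : ℕ} {f : Fin n → ℝ} (hf : Antitone f) (h1 : 1 < n)
    {i : Fin n} (hi : i.val ≠ 0) : |f i| ≤ max |f ⟨1, h1⟩| |f ⟨n - 1, by omega⟩| := by
  rw [max_comm]
  exact abs_le_max_abs_abs (hf (Fin.le_def.mpr (by simp; omega)))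
    (hf (Fin.le_def.mpr (by simp; omega)))

lemma mul_one_sub_div_le_of_sub_mul_le {n z c D : ℝ} (hn : 0 < n) (hD : 0 < D)
    (h : (n - z) * D ≤ c) : n * (1 - c / (n * D)) ≤ z := by
  rw [mul_one_sub, mul_div_assoc', mul_div_mul_left _ _ hn.ne', sub_le_iff_le_add,
    ← sub_le_iff_le_add', le_div_iff₀ hD]
  exact h

/-- **Perron spectral lower bound on the zero forcing number**
(Theorem 25(ii) of the paper). -/
theorem zero_forcing_perron_bound {n : ℕ} (hn : 2 ≤ n)
    (G : SimpleGraph (Fin n)) [DecidableRel G.Adj] (hG : G.Connected)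
    (A : Matrix (Fin n) (Fin n) ℝ) (hA : A = G.adjMatrix ℝ)
    (hAH : A.IsHermitian)
    (lam : Fin n → ℝ) (hmono : Antitone lam)
    (heig : ∃ e : Fin n ≃ Fin n, ∀ i, lam i = hAH.eigenvalues (e i))
    (ν : Fin n → ℝ) (hνpos : ∀ i, 0 < ν i) (hνnorm : ∑ i, ν i ^ 2 = 1)
    (hνeig : A *ᵥ ν = lam ⟨0, by omega⟩ • ν)
    (lamAbs : ℝ)
    (hlamAbs : lamAbs = max |lam ⟨1, by omega⟩| |lam ⟨n - 1, by omega⟩|)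
    (νmin : ℝ) (hνmin : IsLeast (Set.range ν) νmin) :
    (zeroForcingNumber G : ℝ) ≥
      n * (1 - 2 * lamAbs / (n * (lamAbs + lam ⟨0, by omega⟩) * νmin ^ 2)) := by
  subst hA
  have : Nontrivial (Fin n) := Fin.nontrivial_iff_two_le.mpr hn
  obtain ⟨e, he⟩ := heig
  obtain ⟨i₀, rfl⟩ := hνmin.1
  have hν : ν ⬝ᵥ ν = 1 := by simpa [dotProduct, sq] using hνnorm
  have hlast : ∀ i, lam ⟨n - 1, by omega⟩ ≤ hAH.eigenvalues i := fun i => by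
    rw [← e.apply_symm_apply i, ← he]
    exact hmono (Fin.le_def.mpr (Nat.le_sub_one_of_lt (e.symm i).isLt))
  have hgap : ∀ j ≠ e ⟨0, by omega⟩, |hAH.eigenvalues j| ≤ lamAbs := fun j hj => by
    rw [hlamAbs, ← e.apply_symm_apply j, ← he]
    exact abs_le_max_abs_of_antitone hmono _ fun h =>
      hj ((e.apply_symm_apply j).symm.trans (congrArg e (Fin.ext h)))
  have hlamAbs_one : 1 ≤ lamAbs := by
    obtain ⟨b, hab⟩ := hG.preconnected.exists_adj_of_nontrivial ⟨0, by omega⟩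
    have := SimpleGraph.le_neg_one_of_le_eigenvalues hAH hlast hab
    rw [hlamAbs]
    exact le_max_of_le_right (by rw [abs_of_neg (by linarith)]; linarith)
  have hlam₀ := SimpleGraph.nonneg_of_adjMatrix_mulVec_eq_smul hνpos hνeig
  have hmix := hAH.isPerronMixing (by linarith) hν hνeig (he _).symm hgap
  obtain ⟨B, hB, hBforces⟩ := exists_card_eq_zeroForcingNumber G
  obtain ⟨u, w, hc, -⟩ := ZfClosure.exists_isForcingChain rfl hBforces
  have hk := hc.length_mul_le hmix hν hlam₀ hlamAbs_one (hνpos i₀).le fun v => hνmin.2 ⟨v, rfl⟩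
  rw [card_compl, Fintype.card_fin, Nat.cast_sub (by simpa [hB] using card_le_univ B), hB] at hk
  have hD : 0 < (lamAbs + lam ⟨0, by omega⟩) * ν i₀ ^ 2 := by
    have := hνpos i₀
    positivity
  rw [ge_iff_le, mul_assoc]
  exact mul_one_sub_div_le_of_sub_mul_le (by positivity) hD hk
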